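/- Let n ≥ 3, let a₀,…,aₙ be nonzero complex numbers, bⱼ ∈ ℂ with bⱼ² = aⱼ, and let U₁ ⊆ ℂ be open. Let f₁, g₁ : U₁ → ℂ satisfy f₁(t)cos(g₁(t)) = b₀cos(t) and f₁(t)sin(g₁(t)) = b₁sin(t) for all t ∈ U₁, let fₖ(t) := bₖsin(t) and gₖ(t) := 0 for k = 2,…,n−1, and let h(t) := bₙsin(t). Then the map Y built from these functions satisfies Y = ι ∘ X on U₁×ℂⁿ⁻¹, where ι : ℂⁿ⁺¹ → ℂ²ⁿ⁻¹ is the linear isometric embedding ι(x₀,x₁,…,xₙ) := (x₀, x₁, x₂, 0, x₃, 0, …, x_{n-1}, 0, xₙ). -/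

import Mathlib

/-!
Both sides are compared coordinate by coordinate. Coordinates `0` and `1` of `Y` are
`C₁ f₁ cos g₁` and `C₁ f₁ sin g₁`, which the hypotheses on `f₁, g₁` turn into `b₀ C₀` and
`b₁ C₁ sin u¹` (using `C₀ = cos u¹ · C₁`). For `k ≥ 2`, `gₖ = 0` makes coordinate `2k - 2` equal to
`bₖ Cₖ sin uᵏ` and coordinate `2k - 1` vanish, and the last coordinate is `h(uⁿ) = bₙ Cₙ sin uⁿ`
because `Cₙ = 1`.
-/

noncomputable section

open Complex Finset

/-- `Cprod n k u = ∏_{j=k+1}^{n} cos(uʲ)` (zero-based: product of `cos (u j)` over `j ≥ k`). -/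
def Cprod (n k : ℕ) (u : Fin n → ℂ) : ℂ :=
  ∏ j ∈ Finset.univ.filter (fun j : Fin n => k ≤ (j : ℕ)), Complex.cos (u j)

/-- Spherical-coordinate parametrization of the quadric `∑ xⱼ²/aⱼ = 1` (with `bⱼ² = aⱼ`). -/
def sphX (n : ℕ) (b : Fin (n+1) → ℂ) (u : Fin n → ℂ) : Fin (n+1) → ℂ :=
  Fin.cons (b 0 * Cprod n 0 u)
    (fun k : Fin n => b k.succ * Cprod n (k.val + 1) u * Complex.sin (u k))

/-- With `n = m+1`, the map `Y : ℂⁿ → ℂ²ⁿ⁻¹` built from `f₁,…,f_{n-1}`, `g₁,…,g_{n-1}`, `h`. -/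
def petY (m : ℕ) (f g : Fin m → ℂ → ℂ) (h : ℂ → ℂ) (u : Fin (m+1) → ℂ) :
    Fin (2*m+1) → ℂ :=
  fun i =>
    (∑ k : Fin m,
      Cprod (m+1) (k.val + 1) u * f k (u k.castSucc) *
        ((if (i : ℕ) = 2*k.val then 1 else 0) * Complex.cos (g k (u k.castSucc)) +
         (if (i : ℕ) = 2*k.val + 1 then 1 else 0) * Complex.sin (g k (u k.castSucc))))
    + (if (i : ℕ) = 2*m then 1 else 0) * h (u (Fin.last m))

/-- The linear isometric embedding `ι : ℂⁿ⁺¹ → ℂ²ⁿ⁻¹` (with `n = m+1`),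
`ι(x₀,x₁,…,xₙ) = (x₀, x₁, x₂, 0, x₃, 0, …, x_{n-1}, 0, xₙ)`. -/
def iotaEmb (m : ℕ) (x : Fin (m+2) → ℂ) : Fin (2*m+1) → ℂ :=
  fun i =>
    if (i : ℕ) = 0 then x 0
    else if (i : ℕ) = 1 then x 1
    else if (i : ℕ) = 2*m then x (Fin.last (m+1))
    else if (i : ℕ) % 2 = 0 then x ⟨((i : ℕ)/2 + 1) % (m+2), Nat.mod_lt _ (by omega)⟩
    else 0

lemma Cprod_eq_one_of_le {n k : ℕ} (hnk : n ≤ k) (u : Fin n → ℂ) : Cprod n k u = 1 := by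
  rw [Cprod, Finset.filter_false_of_mem (fun j _ => by omega), Finset.prod_empty]

lemma Cprod_zero_eq_cos_mul {n : ℕ} (u : Fin (n+1) → ℂ) :
    Cprod (n+1) 0 u = Complex.cos (u 0) * Cprod (n+1) 1 u := by
  have hfilter : Finset.univ.filter (fun j : Fin (n+1) => 0 ≤ (j : ℕ)) =
      insert 0 (Finset.univ.filter (fun j : Fin (n+1) => 1 ≤ (j : ℕ))) := by
    ext j
    simp only [Finset.mem_filter, Finset.mem_univ, true_and, Finset.mem_insert, Fin.ext_iff,
      Fin.val_zero]
    omega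
  rw [Cprod, hfilter, Finset.prod_insert (by simp), Cprod]

lemma sphX_succ {n : ℕ} (b : Fin (n+1) → ℂ) (u : Fin n → ℂ) (k : Fin n) :
    sphX n b u k.succ = b k.succ * Cprod n (k.val + 1) u * Complex.sin (u k) :=
  Fin.cons_succ _ _ _

section petY

variable {m : ℕ} (f g : Fin m → ℂ → ℂ) (h : ℂ → ℂ) (u : Fin (m+1) → ℂ) {i : Fin (2*m+1)}

lemma petY_apply_of_eq_two_mul {k : Fin m} (hi : (i : ℕ) = 2 * k) :
    petY m f g h u i =
      Cprod (m+1) (k.val + 1) u * f k (u k.castSucc) * Complex.cos (g k (u k.castSucc)) := by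
  rw [petY, Finset.sum_eq_single k (fun j _ hj => ?_) (by simp)]
  · simp [hi, k.isLt.ne]
  · simp [hi, Fin.val_ne_of_ne hj.symm, show 2 * (k : ℕ) ≠ 2 * j + 1 by omega]

lemma petY_apply_of_eq_two_mul_add_one {k : Fin m} (hi : (i : ℕ) = 2 * k + 1) :
    petY m f g h u i =
      Cprod (m+1) (k.val + 1) u * f k (u k.castSucc) * Complex.sin (g k (u k.castSucc)) := by
  rw [petY, Finset.sum_eq_single k (fun j _ hj => ?_) (by simp)]
  · simp [hi, show 2 * (k : ℕ) + 1 ≠ 2 * m by omega]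
  · simp [hi, Fin.val_ne_of_ne hj.symm, show 2 * (k : ℕ) + 1 ≠ 2 * j by omega]

lemma petY_apply_of_eq_two_mul_self (hi : (i : ℕ) = 2 * m) :
    petY m f g h u i = h (u (Fin.last m)) := by
  rw [petY, Finset.sum_eq_zero (fun k _ => ?_)]
  · simp [hi]
  · simp [hi, show 2 * m ≠ 2 * (k : ℕ) by omega, show 2 * m ≠ 2 * (k : ℕ) + 1 by omega]

end petY

section iotaEmb

variable {m : ℕ} (x : Fin (m+2) → ℂ) {i : Fin (2*m+1)}

lemma iotaEmb_apply_of_eq_zero (hi : (i : ℕ) = 0) : iotaEmb m x i = x 0 := by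
  simp [iotaEmb, hi]

lemma iotaEmb_apply_of_eq_one (hi : (i : ℕ) = 1) : iotaEmb m x i = x 1 := by
  simp [iotaEmb, hi]

lemma iotaEmb_apply_of_eq_two_mul {k : ℕ} (hk : 1 ≤ k) (hkm : k < m) (hi : (i : ℕ) = 2 * k) :
    iotaEmb m x i = x ⟨k + 1, by omega⟩ := by
  simp [iotaEmb, hi, show k ≠ 0 by omega, show 2 * k ≠ 1 by omega, show k ≠ m by omega,
    Nat.mod_eq_of_lt (show k + 1 < m + 2 by omega)]

lemma iotaEmb_apply_of_eq_two_mul_add_one {k : ℕ} (hk : 1 ≤ k) (hi : (i : ℕ) = 2 * k + 1) :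
    iotaEmb m x i = 0 := by
  simp [iotaEmb, hi, show k ≠ 0 by omega, show 2 * k + 1 ≠ 2 * m by omega, Nat.add_mod]

lemma iotaEmb_apply_of_eq_two_mul_self (hm : 1 ≤ m) (hi : (i : ℕ) = 2 * m) :
    iotaEmb m x i = x (Fin.last (m+1)) := by
  simp [iotaEmb, hi, show m ≠ 0 by omega, show 2 * m ≠ 1 by omega]

end iotaEmb

lemma Fin.funext_two_mul_add_one {α : Type*} {m : ℕ} {v w : Fin (2*m+1) → α}
    (heven : ∀ (k : Fin m) (i : Fin (2*m+1)), (i : ℕ) = 2 * k → v i = w i)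
    (hodd : ∀ (k : Fin m) (i : Fin (2*m+1)), (i : ℕ) = 2 * k + 1 → v i = w i)
    (hlast : ∀ i : Fin (2*m+1), (i : ℕ) = 2 * m → v i = w i) : v = w := by
  funext i
  obtain ⟨k, hk⟩ | ⟨k, hk⟩ | hi :
      (∃ k : Fin m, (i : ℕ) = 2 * k) ∨ (∃ k : Fin m, (i : ℕ) = 2 * k + 1) ∨ (i : ℕ) = 2 * m := by
    rcases Nat.even_or_odd' i with ⟨k, hk | hk⟩
    · by_cases hkm : k < m
      exacts [Or.inl ⟨⟨k, hkm⟩, hk⟩, Or.inr (Or.inr (by omega))]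
    · exact Or.inr (Or.inl ⟨⟨k, by omega⟩, hk⟩)
  exacts [heven k i hk, hodd k i hk, hlast i hi]

/-- the `z = (0,…,0)` member of Peterson's family coincides with the
quadric itself embedded in ℂ²ⁿ⁻¹ (here `n = m+1 ≥ 3`): `Y = ι ∘ X` on `U₁ × ℂⁿ⁻¹`. -/
theorem stmt18 (m : ℕ) (hm : 2 ≤ m)
    (b : Fin (m+2) → ℂ)
    (U₁ : Set ℂ)
    (f g : Fin m → ℂ → ℂ) (h : ℂ → ℂ)
    (hfg1 : ∀ t ∈ U₁, f ⟨0, by omega⟩ t * Complex.cos (g ⟨0, by omega⟩ t) = b 0 * Complex.cos t ∧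
      f ⟨0, by omega⟩ t * Complex.sin (g ⟨0, by omega⟩ t) = b 1 * Complex.sin t)
    (hfk : ∀ k : Fin m, 1 ≤ k.val → ∀ t : ℂ,
      f k t = b ⟨k.val + 1, by omega⟩ * Complex.sin t ∧ g k t = 0)
    (hh : ∀ t : ℂ, h t = b (Fin.last (m+1)) * Complex.sin t) :
    ∀ u : Fin (m+1) → ℂ, u 0 ∈ U₁ →
      petY m f g h u = iotaEmb m (sphX (m+1) b u) := by
  intro u hu
  have hm0 : 0 < m := by omega
  obtain ⟨hcos, hsin⟩ := hfg1 (u 0) hu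
  have hu0 : u (Fin.castSucc ⟨0, hm0⟩) = u 0 := rfl
  apply Fin.funext_two_mul_add_one
  · intro k i hi
    rw [petY_apply_of_eq_two_mul f g h u hi]
    rcases Nat.eq_zero_or_pos k with hk | hk
    · obtain rfl : k = ⟨0, hm0⟩ := Fin.ext hk
      rw [iotaEmb_apply_of_eq_zero _ (by simpa using hi), sphX, Fin.cons_zero,
        Cprod_zero_eq_cos_mul, hu0]
      linear_combination Cprod (m+1) 1 u * hcos
    · obtain ⟨hf, hg⟩ := hfk k hk (u k.castSucc)
      rw [iotaEmb_apply_of_eq_two_mul _ hk k.isLt hi, hf, hg, Complex.cos_zero, mul_one,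
        mul_left_comm, ← mul_assoc]
      exact (sphX_succ b u k.castSucc).symm
  · intro k i hi
    rw [petY_apply_of_eq_two_mul_add_one f g h u hi]
    rcases Nat.eq_zero_or_pos k with hk | hk
    · obtain rfl : k = ⟨0, hm0⟩ := Fin.ext hk
      rw [iotaEmb_apply_of_eq_one _ (by simpa using hi), ← Fin.succ_zero_eq_one, sphX_succ,
        Fin.succ_zero_eq_one, Fin.val_zero, hu0]
      linear_combination Cprod (m+1) 1 u * hsin
    · rw [iotaEmb_apply_of_eq_two_mul_add_one _ hk hi, (hfk k hk _).2, Complex.sin_zero,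
        mul_zero]
  · intro i hi
    rw [petY_apply_of_eq_two_mul_self f g h u hi, iotaEmb_apply_of_eq_two_mul_self _ hm0 hi,
      hh, ← Fin.succ_last, sphX_succ, Fin.val_last, Cprod_eq_one_of_le le_rfl, mul_one]
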